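/- Comparative statics without differentiability: under the additional substitution assumption (for fixed v₂ ≤ 0 and q₁ < q₁' in (0,1): M(v₂,q₁) ≤ 0 implies M(v₂,q₁') < 0) together with the single-crossing assumption, if v₁ < v₁' with both types having interior maximizers q₁*, q₁*' ∈ (0,1) of Π(·,v₁) and Π(·,v₁') respectively, then q₁* < q₁*' strictly (any selection of maximizers is strictly increasing). -/

import Mathlib

/-!
Write `a = -ψ v₁ > b = -ψ v₁'`; then `q ↦ Π(q,v₁) - Π(q,v₁')` has derivative
`∫_b^a ξ(·,q)`. The first-order condition `∫_{-∞}^b ξ(·,q₁*') = 0` yields a point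
`v₀ ≤ b` with `ξ(v₀,q₁*') ≤ 0`. By the substitution assumption (if `v₀ ≤ 0`) or the
rotation order (if `v₀ > 0`) also `ξ(v₀,q) ≤ 0` for every `q ≥ q₁*'`, and single crossing
makes `ξ(·,q)` negative on `(b,a)`. Hence the difference of the two objectives is strictly
decreasing on `[q₁*', 1)`, which rules out `q₁*' < q₁*` by maximality, and `q₁*' = q₁*`
because the two first-order conditions would then differ by the negative `∫_b^a ξ(·,q₁*)`.
-/

open MeasureTheory Set

lemma setIntegral_pos_of_forall_pos {α : Type*} [MeasurableSpace α] {μ : Measure α}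
    {s : Set α} {f : α → ℝ} (hs : MeasurableSet s) (hμ : μ s ≠ 0)
    (hf : IntegrableOn f s μ) (hpos : ∀ x ∈ s, 0 < f x) : 0 < ∫ x in s, f x ∂μ := by
  rw [setIntegral_pos_iff_support_of_nonneg_ae _ hf, inter_eq_self_of_subset_right
    (show s ⊆ Function.support f from fun x hx => (hpos x hx).ne')]
  · exact pos_iff_ne_zero.2 hμ
  · filter_upwards [ae_restrict_mem hs] with x hx using (hpos x hx).le

lemma exists_nonpos_of_setIntegral_eq_zero {α : Type*} [MeasurableSpace α] {μ : Measure α}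
    {s : Set α} {f : α → ℝ} (hs : MeasurableSet s) (hμ : μ s ≠ 0)
    (hf : IntegrableOn f s μ) (h : ∫ x in s, f x ∂μ = 0) : ∃ x ∈ s, f x ≤ 0 := by
  by_contra! hpos
  exact (setIntegral_pos_of_forall_pos hs hμ hf hpos).ne' h

lemma intervalIntegral_neg_of_neg_on {f : ℝ → ℝ} {a b : ℝ}
    (hf : IntervalIntegrable f volume a b) (hneg : ∀ x ∈ Ioo a b, f x < 0) (hab : a < b) :
    ∫ x in a..b, f x < 0 := by
  have := intervalIntegral.intervalIntegral_pos_of_pos_on hf.neg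
    (fun x hx => neg_pos.2 (hneg x hx)) hab
  rwa [Pi.neg_def, intervalIntegral.integral_neg, neg_pos] at this

lemma intervalIntegral_neg_of_singleCrossing {f : ℝ → ℝ} {v₀ a b : ℝ}
    (hSC : ∀ v v', f v ≤ 0 → v < v' → f v' < 0) (hv₀ : f v₀ ≤ 0) (hv₀a : v₀ ≤ a)
    (hab : a < b) (hf : IntervalIntegrable f volume a b) : ∫ v in a..b, f v < 0 :=
  intervalIntegral_neg_of_neg_on hf (fun v hv => hSC v₀ v hv₀ (hv₀a.trans_lt hv.1)) hab

lemma nonpos_of_rotation_of_substitution {ξ : ℝ → ℝ → ℝ}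
    (hrot : ∀ q ∈ Ioo (0:ℝ) 1, ∀ v : ℝ, 0 < v → ξ v q < 0)
    (hsub : ∀ v : ℝ, v ≤ 0 → ∀ q ∈ Ioo (0:ℝ) 1, ∀ q' ∈ Ioo (0:ℝ) 1,
      q < q' → ξ v q ≤ 0 → ξ v q' < 0)
    {v q q' : ℝ} (hq : q ∈ Ioo (0:ℝ) 1) (hq' : q' ∈ Ioo (0:ℝ) 1) (hqq' : q ≤ q')
    (h : ξ v q ≤ 0) : ξ v q' ≤ 0 := by
  rcases hqq'.lt_or_eq with hlt | rfl
  · rcases le_or_gt v 0 with hv | hv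
    exacts [(hsub v hv q hq q' hq' hlt h).le, (hrot q' hq' v hv).le]
  · exact h

lemma IsMaxOn.hasDerivAt_eq_zero_of_mem_Ioo {f : ℝ → ℝ} {f' a b x : ℝ}
    (hmax : IsMaxOn f (Icc a b) x) (hx : x ∈ Ioo a b) (hf : HasDerivAt f f' x) : f' = 0 :=
  (hmax.isLocalMax (Icc_mem_nhds hx.1 hx.2)).hasDerivAt_eq_zero hf

lemma strictAntiOn_Icc_of_hasDerivAt_neg {f f' : ℝ → ℝ} {a b : ℝ}
    (hf : ∀ x ∈ Icc a b, HasDerivAt f (f' x) x) (hf' : ∀ x ∈ Ioo a b, f' x < 0) :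
    StrictAntiOn f (Icc a b) := by
  refine strictAntiOn_of_hasDerivWithinAt_neg (f' := f') (convex_Icc a b)
    (fun x hx => (hf x hx).continuousAt.continuousWithinAt) (fun x hx => ?_) ?_
  · rw [interior_Icc] at hx ⊢
    exact (hf x (Ioo_subset_Icc_self hx)).hasDerivWithinAt
  · rwa [interior_Icc]

lemma not_lt_of_isMaxOn_of_strictAntiOn_sub {f g : ℝ → ℝ} {s : Set ℝ} {x y : ℝ}
    (hx : IsMaxOn f s x) (hy : IsMaxOn g s y) (hxs : x ∈ s) (hys : y ∈ s)
    (hanti : StrictAntiOn (fun q => f q - g q) (Icc y x)) : ¬ y < x := by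
  intro hyx
  have hfg := hanti (left_mem_Icc.2 hyx.le) (right_mem_Icc.2 hyx.le) hyx
  have hf : f y ≤ f x := hx hys
  have hg : g x ≤ g y := hy hxs
  simp only at hfg
  linarith

theorem stmt12_general (ξ : ℝ → ℝ → ℝ) (ψ : ℝ → ℝ)
    (hψ : StrictMono ψ)
    (hrot : ∀ q ∈ Ioo (0:ℝ) 1, ∀ v : ℝ, 0 < v → ξ v q < 0)
    (hSC : ∀ q ∈ Ioo (0:ℝ) 1, ∀ v v' : ℝ, ξ v q ≤ 0 → v < v' → ξ v' q < 0)
    (hsub : ∀ v : ℝ, v ≤ 0 → ∀ q ∈ Ioo (0:ℝ) 1, ∀ q' ∈ Ioo (0:ℝ) 1,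
      q < q' → ξ v q ≤ 0 → ξ v q' < 0)
    (Pr : ℝ → ℝ → ℝ)
    (hderiv : ∀ v : ℝ, ∀ q ∈ Ioo (0:ℝ) 1,
      HasDerivAt (fun q' => Pr q' v) (∫ v₂ in Iic (-ψ v), ξ v₂ q) q)
    (hIntξ : ∀ v : ℝ, ∀ q ∈ Ioo (0:ℝ) 1,
      IntegrableOn (fun v₂ => ξ v₂ q) (Iic (-ψ v)) volume)
    (v₁ v₁' q₁ q₁' : ℝ) (hv : v₁ < v₁')
    (hq₁ : q₁ ∈ Ioo (0:ℝ) 1) (hq₁' : q₁' ∈ Ioo (0:ℝ) 1)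
    (hmax : IsMaxOn (fun q => Pr q v₁) (Icc 0 1) q₁)
    (hmax' : IsMaxOn (fun q => Pr q v₁') (Icc 0 1) q₁') :
    q₁ < q₁' := by
  have hba : -ψ v₁' < -ψ v₁ := neg_lt_neg (hψ hv)
  have hfoc := hmax.hasDerivAt_eq_zero_of_mem_Ioo hq₁ (hderiv v₁ q₁ hq₁)
  have hfoc' := hmax'.hasDerivAt_eq_zero_of_mem_Ioo hq₁' (hderiv v₁' q₁' hq₁')
  obtain ⟨v₀, hv₀b, hv₀⟩ := exists_nonpos_of_setIntegral_eq_zero measurableSet_Iic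
    (by simp) (hIntξ v₁' q₁' hq₁') hfoc'
  have hdiff : ∀ q ∈ Ioo (0:ℝ) 1, HasDerivAt (fun q' => Pr q' v₁ - Pr q' v₁')
      (∫ v₂ in -ψ v₁'..-ψ v₁, ξ v₂ q) q := fun q hq => by
    rw [← intervalIntegral.integral_Iic_sub_Iic (hIntξ v₁' q hq) (hIntξ v₁ q hq)]
    exact (hderiv v₁ q hq).sub (hderiv v₁' q hq)
  have hdiff_neg : ∀ q ∈ Ioo (0:ℝ) 1, q₁' ≤ q →
      ∫ v₂ in -ψ v₁'..-ψ v₁, ξ v₂ q < 0 :=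
    fun q hq hq₁'q => intervalIntegral_neg_of_singleCrossing (hSC q hq)
      (nonpos_of_rotation_of_substitution hrot hsub hq₁' hq hq₁'q hv₀) hv₀b hba
      ((intervalIntegrable_iff_integrableOn_Ioc_of_le hba.le).2
        ((hIntξ v₁ q hq).mono_set Ioc_subset_Iic_self))
  rcases lt_trichotomy q₁ q₁' with hlt | rfl | hgt
  · exact hlt
  · have := (hdiff q₁ hq₁).unique ((hderiv v₁ q₁ hq₁).sub (hderiv v₁' q₁ hq₁))
    linarith [hdiff_neg q₁ hq₁ le_rfl]
  · have hmem : ∀ q ∈ Icc q₁' q₁, q ∈ Ioo (0:ℝ) 1 := fun q hq =>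
      ⟨hq₁'.1.trans_le hq.1, hq.2.trans_lt hq₁.2⟩
    refine absurd hgt (not_lt_of_isMaxOn_of_strictAntiOn_sub hmax hmax'
      (Ioo_subset_Icc_self hq₁) (Ioo_subset_Icc_self hq₁') ?_)
    exact strictAntiOn_Icc_of_hasDerivAt_neg (fun q hq => hdiff q (hmem q hq))
      (fun q hq => hdiff_neg q (hmem q (Ioo_subset_Icc_self hq)) hq.1.le)

/-- Comparative statics without differentiability: under the substitution
assumption and the single-crossing assumption, any interior maximizers of
`Π(·,v₁)` and `Π(·,v₁')` with `v₁ < v₁'` satisfy `q₁* < q₁*'`. -/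
theorem stmt12 (F Fq ξ : ℝ → ℝ → ℝ) (ψ : ℝ → ℝ)
    (hξ : ∀ v q, ξ v q = -F v q + (1 - q) * Fq v q)
    (hψ : StrictMono ψ)
    (hrot : ∀ q ∈ Ioo (0:ℝ) 1, ∀ v : ℝ, 0 < v → ξ v q < 0)
    (hSC : ∀ q ∈ Ioo (0:ℝ) 1, ∀ v v' : ℝ, ξ v q ≤ 0 → v < v' → ξ v' q < 0)
    (hsub : ∀ v : ℝ, v ≤ 0 → ∀ q ∈ Ioo (0:ℝ) 1, ∀ q' ∈ Ioo (0:ℝ) 1,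
      q < q' → ξ v q ≤ 0 → ξ v q' < 0)
    (Pr : ℝ → ℝ → ℝ)
    (hPr : ∀ q v, Pr q v = ψ v + (1 - q) * ∫ v₂ in Iic (-ψ v), F v₂ q)
    (hderiv : ∀ v : ℝ, ∀ q ∈ Ioo (0:ℝ) 1,
      HasDerivAt (fun q' => Pr q' v) (∫ v₂ in Iic (-ψ v), ξ v₂ q) q)
    (hIntξ : ∀ v : ℝ, ∀ q ∈ Ioo (0:ℝ) 1,
      IntegrableOn (fun v₂ => ξ v₂ q) (Iic (-ψ v)) volume)
    (v₁ v₁' q₁ q₁' : ℝ) (hv : v₁ < v₁')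
    (hq₁ : q₁ ∈ Ioo (0:ℝ) 1) (hq₁' : q₁' ∈ Ioo (0:ℝ) 1)
    (hmax : IsMaxOn (fun q => Pr q v₁) (Icc 0 1) q₁)
    (hmax' : IsMaxOn (fun q => Pr q v₁') (Icc 0 1) q₁') :
    q₁ < q₁' :=
  stmt12_general ξ ψ hψ hrot hSC hsub Pr hderiv hIntξ v₁ v₁' q₁ q₁' hv hq₁ hq₁' hmax hmax'
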